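/- arXiv:2306.08411 — 3 statements merged into one kernel-verified Lean document; each statement's English description precedes it below -/
import Mathlib

section
/- Define C_k(x,t) = ∑_{ℓ=0}^{k} (-1)^ℓ b^{ℓ(t-x)} b^{σ_ℓ} [x choose ℓ]_b [t-x choose k-ℓ]_b γ(t-ℓ, k-ℓ). Then for all integers x, k with 0 ≤ x, k ≤ t, C_{k+1}(x+1, t+1) = C_{k+1}(x, t+1) + b^{2t+1-x} · C_k(x, t). -/
open Finset

/-- Gaussian binomial coefficient with base `b`, zero outside `0 ≤ k ≤ x`. -/
noncomputable def gaussb (b : ℝ) (x k : ℤ) : ℝ :=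
  if 0 ≤ k ∧ k ≤ x then
    ∏ m ∈ Finset.range k.toNat, (b ^ (x - (m : ℤ)) - 1) / (b ^ ((m : ℤ) + 1) - 1)
  else 0

/-- Negative-q Gamma function `γ(x,k) = ∏_{i=0}^{k-1} (-b^x - b^i)`, equal to 1 for `k ≤ 0`. -/
noncomputable def qgammab (b : ℝ) (x k : ℤ) : ℝ :=
  ∏ i ∈ Finset.range k.toNat, (-(b ^ x) - b ^ i)

/-- Negative-q Beta function `β(x,k) = ∏_{i=0}^{k-1} (b^{x-i}-1)/(b-1)`. -/
noncomputable def betab (b : ℝ) (x : ℤ) (k : ℕ) : ℝ :=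
  ∏ i ∈ Finset.range k, (b ^ (x - (i : ℤ)) - 1) / (b - 1)

/-- Negative-q Krawtchouk polynomial. -/
noncomputable def CK (b : ℝ) (k x t : ℤ) : ℝ :=
  ∑ l ∈ Finset.range (k.toNat + 1),
    (-1 : ℝ) ^ l * b ^ ((l : ℤ) * (t - x)) * b ^ (l * (l - 1) / 2) *
      gaussb b x l * gaussb b (t - x) ((k : ℤ) - l) * qgammab b (t - (l : ℤ)) ((k : ℤ) - l)

namespace KrawAux

variable {b : ℝ}

lemma gaussb_of_neg {x k : ℤ} (h : k < 0) : gaussb b x k = 0 := by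
  rw [gaussb, if_neg (by omega : ¬(0 ≤ k ∧ k ≤ x))]

lemma gaussb_of_gt {x k : ℤ} (h : x < k) : gaussb b x k = 0 := by
  rw [gaussb, if_neg (by omega : ¬(0 ≤ k ∧ k ≤ x))]

lemma gaussb_zero {x : ℤ} (hx : 0 ≤ x) : gaussb b x 0 = 1 := by
  rw [gaussb, if_pos ⟨le_refl 0, hx⟩]; simp

noncomputable def NuP (b : ℝ) (x : ℤ) (l : ℕ) : ℝ := ∏ m ∈ range l, (b ^ (x - (m : ℤ)) - 1)
noncomputable def DeP (b : ℝ) (l : ℕ) : ℝ := ∏ m ∈ range l, (b ^ ((m : ℤ) + 1) - 1)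

lemma DeP_ne_zero (hb1 : ∀ m : ℕ, b ^ ((m : ℤ) + 1) - 1 ≠ 0) (l : ℕ) : DeP b l ≠ 0 :=
  Finset.prod_ne_zero_iff.mpr fun m _ => hb1 m

lemma NuP_eq_zero {x : ℤ} {l : ℕ} (hx : 0 ≤ x) (h : x < l) : NuP b x l = 0 := by
  refine Finset.prod_eq_zero (Finset.mem_range.mpr (by omega : x.toNat < l)) ?_
  rw [Int.toNat_of_nonneg hx]; simp

lemma gaussb_eq_div {x : ℤ} (hx : 0 ≤ x) (l : ℕ) :
    gaussb b x (l : ℤ) = NuP b x l / DeP b l := by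
  by_cases h : (l : ℤ) ≤ x
  · rw [gaussb, if_pos ⟨Int.natCast_nonneg l, h⟩]
    rw [Int.toNat_natCast, NuP, DeP, ← Finset.prod_div_distrib]
  · rw [gaussb_of_gt (by omega), NuP_eq_zero hx (by omega), zero_div]

lemma NuP_shift (x : ℤ) (j : ℕ) : NuP b (x + 1) (j + 1) = (b ^ (x + 1) - 1) * NuP b x j := by
  rw [NuP, Finset.prod_range_succ']
  have h1 : ∀ m : ℕ, b ^ (x + 1 - ((m : ℕ) + 1 : ℕ) : ℤ) - 1 = b ^ (x - (m : ℤ)) - 1 := by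
    intro m; congr 1; congr 1; push_cast; ring
  rw [Finset.prod_congr rfl fun m _ => h1 m]
  simp [NuP, mul_comm]

lemma NuP_succ (x : ℤ) (j : ℕ) : NuP b x (j + 1) = NuP b x j * (b ^ (x - (j : ℤ)) - 1) :=
  Finset.prod_range_succ _ _

lemma DeP_succ (j : ℕ) : DeP b (j + 1) = DeP b j * (b ^ ((j : ℤ) + 1) - 1) :=
  Finset.prod_range_succ _ _

lemma gaussb_pascalB (hb0 : b ≠ 0) (hb1 : ∀ m : ℕ, b ^ ((m : ℤ) + 1) - 1 ≠ 0)
    {x : ℤ} (hx : 0 ≤ x) (l : ℕ) :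
    gaussb b (x + 1) (l : ℤ) = b ^ (l : ℤ) * gaussb b x (l : ℤ) + gaussb b x ((l : ℤ) - 1) := by
  cases l with
  | zero =>
      simp only [Nat.cast_zero, zpow_zero, one_mul]
      rw [gaussb_zero (by omega), gaussb_zero hx, gaussb_of_neg (by norm_num)]
      ring
  | succ j =>
      have h1 : ((j + 1 : ℕ) : ℤ) - 1 = (j : ℤ) := by push_cast; ring
      rw [h1, gaussb_eq_div (by omega) (j + 1), gaussb_eq_div hx (j + 1), gaussb_eq_div hx j,
        NuP_shift, NuP_succ, DeP_succ]
      have hD := DeP_ne_zero hb1 j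
      have hd : b ^ ((j : ℤ) + 1) - 1 ≠ 0 := hb1 j
      have hkey : b ^ (x + 1) = b ^ ((j : ℤ) + 1) * b ^ (x - (j : ℤ)) := by
        rw [← zpow_add₀ hb0, show (j : ℤ) + 1 + (x - (j : ℤ)) = x + 1 from by ring]
      have hc : ((j + 1 : ℕ) : ℤ) = (j : ℤ) + 1 := by push_cast; ring
      rw [hc, hkey]
      field_simp
      ring

lemma gaussb_pascalA (hb0 : b ≠ 0) (hb1 : ∀ m : ℕ, b ^ ((m : ℤ) + 1) - 1 ≠ 0)
    {n : ℤ} (hn : 0 ≤ n) (m : ℕ) :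
    gaussb b (n + 1) (m : ℤ) =
      gaussb b n (m : ℤ) + b ^ (n + 1 - (m : ℤ)) * gaussb b n ((m : ℤ) - 1) := by
  cases m with
  | zero =>
      simp only [Nat.cast_zero]
      rw [gaussb_zero (by omega), gaussb_zero hn, gaussb_of_neg (by norm_num)]
      ring
  | succ j =>
      have h1 : ((j + 1 : ℕ) : ℤ) - 1 = (j : ℤ) := by push_cast; ring
      rw [h1, gaussb_eq_div (by omega) (j + 1), gaussb_eq_div hn (j + 1), gaussb_eq_div hn j,
        NuP_shift, NuP_succ, DeP_succ]
      have hD := DeP_ne_zero hb1 j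
      have hd : b ^ ((j : ℤ) + 1) - 1 ≠ 0 := hb1 j
      have hc : ((j + 1 : ℕ) : ℤ) = (j : ℤ) + 1 := by push_cast; ring
      rw [hc]
      have hkey2 : b ^ (n + 1 - ((j : ℤ) + 1)) = b ^ (n - (j : ℤ)) := by
        congr 1; ring
      have hkey3 : b ^ (n + 1) = b ^ ((j : ℤ) + 1) * b ^ (n - (j : ℤ)) := by
        rw [← zpow_add₀ hb0, show (j : ℤ) + 1 + (n - (j : ℤ)) = n + 1 from by ring]
      rw [hkey2, hkey3]
      field_simp
      ring

lemma qgammab_step (hb0 : b ≠ 0) (y : ℤ) (j : ℕ) :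
    qgammab b (y + 1) ((j : ℤ) + 1) = (-(b ^ (y + 1)) - 1) * b ^ (j : ℤ) * qgammab b y (j : ℤ) := by
  rw [qgammab, qgammab, show ((j : ℤ) + 1).toNat = j + 1 from by omega, Int.toNat_natCast,
    Finset.prod_range_succ']
  have h1 : ∀ i : ℕ, (-(b ^ (y + 1)) - b ^ (i + 1)) = b * (-(b ^ y) - b ^ i) := by
    intro i
    rw [zpow_add_one₀ hb0, pow_succ]
    ring
  rw [Finset.prod_congr rfl fun i _ => h1 i, Finset.prod_mul_distrib, Finset.prod_const,
    Finset.card_range, ← zpow_natCast b j, pow_zero]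
  ring

noncomputable def UU (b : ℝ) (t x k : ℤ) (l : ℕ) : ℝ :=
  (-1 : ℝ) ^ l * b ^ ((l : ℤ) * (t - x)) * b ^ (l * (l - 1) / 2) *
    gaussb b x ((l : ℤ) - 1) * gaussb b (t - x) (k + 1 - (l : ℤ)) *
    qgammab b (t + 1 - (l : ℤ)) (k + 1 - (l : ℤ))

noncomputable def VV (b : ℝ) (t x k : ℤ) (l : ℕ) : ℝ :=
  (-1 : ℝ) ^ l * b ^ ((l : ℤ) * (t + 1 - x) + (t - x - k + (l : ℤ))) * b ^ (l * (l - 1) / 2) *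
    gaussb b x (l : ℤ) * gaussb b (t - x) (k - (l : ℤ)) *
    qgammab b (t + 1 - (l : ℤ)) (k + 1 - (l : ℤ))

end KrawAux

open KrawAux in
theorem krawtchouk_recurrence (q : ℝ) (hq : 2 ≤ q) (t x k : ℤ)
    (hx0 : 0 ≤ x) (hxt : x ≤ t) (hk0 : 0 ≤ k) (hkt : k ≤ t) :
    CK (-q) (k + 1) (x + 1) (t + 1) =
      CK (-q) (k + 1) x (t + 1) + (-q) ^ (2 * t + 1 - x) * CK (-q) k x t := by
  have hq0 : (0 : ℝ) < q := by linarith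
  set b : ℝ := -q with hbdef
  have hb0 : b ≠ 0 := by rw [hbdef]; exact neg_ne_zero.mpr (by linarith)
  have hb1 : ∀ m : ℕ, b ^ ((m : ℤ) + 1) - 1 ≠ 0 := by
    intro m h
    have h1 : b ^ ((m : ℤ) + 1) = 1 := by linarith [sub_eq_zero.mp h]
    rw [show ((m : ℤ) + 1) = ((m + 1 : ℕ) : ℤ) from by push_cast; ring, zpow_natCast] at h1
    have h2 : |b| ^ (m + 1) = 1 := by rw [← abs_pow, h1, abs_one]
    have h3 : |b| = q := by rw [hbdef, abs_neg, abs_of_pos hq0]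
    rw [h3] at h2
    have h4 : q ≤ q ^ (m + 1) := le_self_pow₀ (by linarith) (by omega)
    nlinarith
  set K := k.toNat with hKdef
  have hkK : ((K : ℤ)) = k := Int.toNat_of_nonneg hk0
  rw [← sub_eq_iff_eq_add']
  simp only [CK]
  rw [show (k + 1).toNat = K + 1 from by omega, ← hKdef]
  simp only [show t + 1 - (x + 1) = t - x from by ring]
  rw [← Finset.sum_sub_distrib, Finset.mul_sum]
  have hUV : ∀ l ∈ Finset.range (K + 1 + 1),
      ((-1 : ℝ) ^ l * b ^ ((l : ℤ) * (t - x)) * b ^ (l * (l - 1) / 2) *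
          gaussb b (x + 1) (l : ℤ) * gaussb b (t - x) (k + 1 - (l : ℤ)) *
          qgammab b (t + 1 - (l : ℤ)) (k + 1 - (l : ℤ)) -
        (-1 : ℝ) ^ l * b ^ ((l : ℤ) * (t + 1 - x)) * b ^ (l * (l - 1) / 2) *
          gaussb b x (l : ℤ) * gaussb b (t + 1 - x) (k + 1 - (l : ℤ)) *
          qgammab b (t + 1 - (l : ℤ)) (k + 1 - (l : ℤ)))
      = UU b t x k l - VV b t x k l := by
    intro l hl
    rw [Finset.mem_range] at hl
    have hm : (k + 1 - (l : ℤ)) = ((K + 1 - l : ℕ) : ℤ) := by omega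
    have hg : gaussb b (t + 1 - x) (k + 1 - (l : ℤ)) =
        gaussb b (t - x) (k + 1 - (l : ℤ)) +
          b ^ (t - x - k + (l : ℤ)) * gaussb b (t - x) (k - (l : ℤ)) := by
      rw [hm, show t + 1 - x = (t - x) + 1 from by ring,
        gaussb_pascalA hb0 hb1 (by omega : (0 : ℤ) ≤ t - x) (K + 1 - l), ← hm]
      rw [show (t - x) + 1 - (k + 1 - (l : ℤ)) = t - x - k + (l : ℤ) from by ring,
        show k + 1 - (l : ℤ) - 1 = k - (l : ℤ) from by ring]
    rw [hg, gaussb_pascalB hb0 hb1 hx0 l]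
    simp only [UU, VV]
    have r1 : b ^ ((l : ℤ) * (t - x)) * b ^ (l : ℤ) = b ^ ((l : ℤ) * (t + 1 - x)) := by
      rw [← zpow_add₀ hb0]; congr 1; ring
    have r2 : b ^ ((l : ℤ) * (t + 1 - x)) * b ^ (t - x - k + (l : ℤ)) =
        b ^ ((l : ℤ) * (t + 1 - x) + (t - x - k + (l : ℤ))) := by
      rw [← zpow_add₀ hb0]
    linear_combination
      ((-1 : ℝ) ^ l * b ^ (l * (l - 1) / 2) * qgammab b (t + 1 - (l : ℤ)) (k + 1 - (l : ℤ)) *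
        gaussb b x (l : ℤ) * gaussb b (t - x) (k + 1 - (l : ℤ))) * r1 -
      ((-1 : ℝ) ^ l * b ^ (l * (l - 1) / 2) * qgammab b (t + 1 - (l : ℤ)) (k + 1 - (l : ℤ)) *
        gaussb b x (l : ℤ) * gaussb b (t - x) (k - (l : ℤ))) * r2
  refine Eq.trans (Finset.sum_congr rfl hUV) ?_
  rw [Finset.sum_sub_distrib,
    Finset.sum_range_succ' (fun l => UU b t x k l) (K + 1),
    Finset.sum_range_succ (fun l => VV b t x k l) (K + 1)]
  have hU0 : UU b t x k 0 = 0 := by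
    simp only [UU, Nat.cast_zero]
    rw [gaussb_of_neg (by norm_num : (0 : ℤ) - 1 < 0)]
    ring
  have hVK : VV b t x k (K + 1) = 0 := by
    simp only [VV]
    rw [show k - ((K + 1 : ℕ) : ℤ) = -1 from by omega,
      show gaussb b (t - x) (-1 : ℤ) = 0 from gaussb_of_neg (by norm_num)]
    ring
  rw [hU0, hVK, add_zero, add_zero, ← Finset.sum_sub_distrib]
  refine Finset.sum_congr rfl fun l hl => ?_
  rw [Finset.mem_range] at hl
  simp only [UU, VV, Nat.cast_add, Nat.cast_one, Nat.add_sub_cancel]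
  rw [show (l : ℤ) + 1 - 1 = (l : ℤ) from by ring,
    show k + 1 - ((l : ℤ) + 1) = k - (l : ℤ) from by ring,
    show t + 1 - ((l : ℤ) + 1) = t - (l : ℤ) from by ring]
  have hγ : qgammab b (t + 1 - (l : ℤ)) (k + 1 - (l : ℤ)) =
      (-(b ^ (t - (l : ℤ) + 1)) - 1) * b ^ (k - (l : ℤ)) * qgammab b (t - (l : ℤ)) (k - (l : ℤ)) := by
    have hj : k - (l : ℤ) = ((K - l : ℕ) : ℤ) := by omega
    rw [show t + 1 - (l : ℤ) = (t - (l : ℤ)) + 1 from by ring,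
      show k + 1 - (l : ℤ) = ((K - l : ℕ) : ℤ) + 1 from by omega,
      qgammab_step hb0 (t - (l : ℤ)) (K - l), ← hj]
  rw [hγ]
  have hσ : b ^ ((l + 1) * l / 2) = b ^ (l * (l - 1) / 2) * b ^ (l : ℤ) := by
    have he : (l + 1) * l / 2 = l * (l - 1) / 2 + l := by
      have := Nat.triangle_succ l
      simpa using this
    rw [he, pow_add, zpow_natCast]
  have r1 : b ^ (((l : ℤ) + 1) * (t - x)) = b ^ ((l : ℤ) * (t - x)) * b ^ (t - x) := by
    rw [← zpow_add₀ hb0]; congr 1; ring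
  have r2 : b ^ ((l : ℤ) * (t + 1 - x) + (t - x - k + (l : ℤ))) * b ^ (k - (l : ℤ)) =
      b ^ ((l : ℤ) * (t - x)) * b ^ (t - x) * b ^ (l : ℤ) := by
    rw [← zpow_add₀ hb0, ← zpow_add₀ hb0, ← zpow_add₀ hb0]; congr 1; ring
  have r3 : b ^ (l : ℤ) * b ^ (t - (l : ℤ) + 1) = b ^ (t + 1) := by
    rw [← zpow_add₀ hb0]; congr 1; ring
  have r4 : b ^ (2 * t + 1 - x) = b ^ (t - x) * b ^ (t + 1) := by
    rw [← zpow_add₀ hb0]; congr 1; ring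
  rw [hσ, r1, r4]
  linear_combination
    ((-1 : ℝ) ^ l * b ^ (l * (l - 1) / 2) * gaussb b x (l : ℤ) *
      gaussb b (t - x) (k - (l : ℤ)) * qgammab b (t - (l : ℤ)) (k - (l : ℤ)) *
      (b ^ (t - (l : ℤ) + 1) + 1)) * r2 +
    ((-1 : ℝ) ^ l * b ^ (l * (l - 1) / 2) * gaussb b x (l : ℤ) *
      gaussb b (t - x) (k - (l : ℤ)) * qgammab b (t - (l : ℤ)) (k - (l : ℤ)) *
      b ^ ((l : ℤ) * (t - x)) * b ^ (t - x)) * r3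
end

section
/- Define δ(λ, φ, j) = ∑_{i=0}^{j} [j choose i]_b (-1)^i b^{σ_i} γ(λ-i, φ). Then for all real λ and integers φ, j ≥ 0, δ(λ, φ, j) = (-1)^j · (∏_{i=0}^{j-1}(b^φ - b^i)) · γ(λ-j, φ-j) · b^{j(λ-j)}. -/
open Finset

noncomputable def gg (b : ℝ) (j i : ℕ) : ℝ :=
  (∏ m ∈ Finset.range i, (b ^ ((j:ℤ) - m) - 1)) / (∏ m ∈ Finset.range i, (b ^ ((m:ℤ) + 1) - 1))

lemma hbm {b : ℝ} (hb : ∀ i : ℕ, 0 < i → b ^ i ≠ 1) (m : ℕ) (hm : 0 < m) :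
    b ^ ((m:ℤ)) - 1 ≠ 0 := by
  rw [zpow_natCast]; exact sub_ne_zero_of_ne (hb m hm)

lemma den_ne {b : ℝ} (hb : ∀ i : ℕ, 0 < i → b ^ i ≠ 1) (i : ℕ) :
    (∏ m ∈ Finset.range i, (b ^ ((m:ℤ) + 1) - 1)) ≠ 0 := by
  apply Finset.prod_ne_zero_iff.2
  intro m _
  have := hbm hb (m+1) (Nat.succ_pos m)
  simpa [Int.natCast_succ] using this

lemma gaussb_eq_gg {b : ℝ} (j i : ℕ) : gaussb b (j:ℤ) (i:ℤ) = gg b j i := by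
  unfold gaussb gg
  rw [← Finset.prod_div_distrib]
  by_cases h : (i:ℤ) ≤ (j:ℤ)
  · rw [if_pos ⟨Int.natCast_nonneg i, h⟩, Int.toNat_natCast]
  · rw [if_neg (by tauto)]
    symm
    push_neg at h
    apply Finset.prod_eq_zero (i := j) (Finset.mem_range.2 (by exact_mod_cast h))
    simp

lemma gg_pascal {b : ℝ} (hb0 : b ≠ 0) (hb : ∀ i : ℕ, 0 < i → b ^ i ≠ 1) (j i : ℕ) :
    gg b (j+1) (i+1) = gg b j (i+1) + b ^ ((j:ℤ) - i) * gg b j i := by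
  have d1 : (∏ m ∈ Finset.range i, (b ^ ((m:ℤ) + 1) - 1)) ≠ 0 := den_ne hb i
  have d2 : b ^ ((i:ℤ)+1) - 1 ≠ 0 := by
    have := hbm hb (i+1) (Nat.succ_pos i); push_cast at this ⊢; exact this
  have hnum : (∏ m ∈ Finset.range (i+1), (b ^ (((j+1:ℕ):ℤ) - (m:ℤ)) - 1))
      = (b ^ ((j:ℤ)+1) - 1) * ∏ m ∈ Finset.range i, (b ^ ((j:ℤ) - (m:ℤ)) - 1) := by
    rw [Finset.prod_range_succ']
    rw [mul_comm]
    congr 1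
    apply Finset.prod_congr rfl
    intro m _
    have e : ((j+1:ℕ):ℤ) - ((m+1:ℕ):ℤ) = (j:ℤ) - (m:ℤ) := by push_cast; ring
    rw [e]
  have hden : (∏ m ∈ Finset.range (i+1), (b ^ ((m:ℤ) + 1) - 1))
      = (∏ m ∈ Finset.range i, (b ^ ((m:ℤ) + 1) - 1)) * (b ^ ((i:ℤ)+1) - 1) :=
    Finset.prod_range_succ _ _
  have hnum2 : (∏ m ∈ Finset.range (i+1), (b ^ ((j:ℤ) - (m:ℤ)) - 1))
      = (∏ m ∈ Finset.range i, (b ^ ((j:ℤ) - (m:ℤ)) - 1)) * (b ^ ((j:ℤ) - i) - 1) :=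
    Finset.prod_range_succ _ _
  have key : b ^ ((j:ℤ)+1) = b ^ ((j:ℤ)-i) * b ^ ((i:ℤ)+1) := by
    rw [← zpow_add₀ hb0]; ring_nf
  unfold gg
  rw [hnum, hden, hnum2, key]
  field_simp
  ring

lemma gg_of_gt {b : ℝ} {j i : ℕ} (h : j < i) : gg b j i = 0 := by
  rw [← gaussb_eq_gg]
  unfold gaussb
  rw [if_neg]
  rintro ⟨-, h2⟩
  exact absurd (by exact_mod_cast h2) (Nat.not_le.2 h)

lemma qg_nat {b : ℝ} (x : ℤ) (k : ℕ) :
    qgammab b x (k:ℤ) = ∏ i ∈ Finset.range k, (-(b ^ x) - b ^ i) := by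
  simp [qgammab]

lemma qg_succ {b : ℝ} (x : ℤ) (k : ℕ) :
    qgammab b x ((k:ℤ)+1) = qgammab b x (k:ℤ) * (-(b ^ x) - b ^ k) := by
  have e : ((k:ℤ)+1) = ((k+1:ℕ):ℤ) := by push_cast; ring
  rw [e, qg_nat, qg_nat, Finset.prod_range_succ]

lemma qg_shift {b : ℝ} (hb0 : b ≠ 0) (x : ℤ) (k : ℕ) :
    qgammab b x ((k:ℤ)+1) = (-(b ^ x) - 1) * (b ^ k * qgammab b (x-1) (k:ℤ)) := by
  have e : ((k:ℤ)+1) = ((k+1:ℕ):ℤ) := by push_cast; ring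
  rw [e, qg_nat, qg_nat, Finset.prod_range_succ']
  have hbx : b ^ (x-1) * b = b ^ x := by
    rw [zpow_sub_one₀ hb0]; field_simp
  have e2 : ∀ i : ℕ, (-(b ^ x) - b ^ (i+1)) = b * (-(b ^ (x-1)) - b ^ i) := by
    intro i
    rw [pow_succ, ← hbx]; ring
  rw [Finset.prod_congr rfl (fun i _ => e2 i), Finset.prod_mul_distrib,
    Finset.prod_const, Finset.card_range, pow_zero]
  ring

lemma qg_diff {b : ℝ} (hb0 : b ≠ 0) (x : ℤ) (k : ℕ) :
    qgammab b x (k:ℤ) - qgammab b (x-1) (k:ℤ)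
      = -(b ^ (x-1)) * ((b:ℝ) ^ k - 1) * qgammab b (x-1) ((k:ℤ)-1) := by
  cases k with
  | zero => simp [qgammab]
  | succ k =>
    have e : ((k+1:ℕ):ℤ) = (k:ℤ)+1 := by push_cast; ring
    have e2 : ((k+1:ℕ):ℤ) - 1 = (k:ℤ) := by push_cast; ring
    rw [e2, e, qg_shift hb0, qg_succ]
    have hbx : b ^ (x-1) * b = b ^ x := by
      rw [zpow_sub_one₀ hb0]; field_simp
    have h1 : b ^ x * (b:ℝ) ^ k = b ^ (x-1) * b ^ (k+1) := by
      rw [pow_succ, ← hbx]; ring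
    linear_combination (-(qgammab b (x-1) (k:ℤ))) * h1

theorem delta_closed_form (b : ℝ) (hb0 : b ≠ 0) (hb : ∀ i : ℕ, 0 < i → b ^ i ≠ 1)
    (lam : ℤ) (phi j : ℕ) :
    ∑ i ∈ Finset.range (j + 1),
        gaussb b (j : ℤ) (i : ℤ) * (-1 : ℝ) ^ i * b ^ (i * (i - 1) / 2) *
          qgammab b (lam - (i : ℤ)) (phi : ℤ) =
      (-1 : ℝ) ^ j * (∏ i ∈ Finset.range j, ((b : ℝ) ^ phi - b ^ i)) *
        qgammab b (lam - (j : ℤ)) ((phi : ℤ) - j) * b ^ ((j : ℤ) * (lam - (j : ℤ))) := by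
  induction j generalizing lam with
  | zero => simp [gaussb, qgammab]
  | succ j ih =>
    simp only [gaussb_eq_gg]
    rw [Finset.sum_range_succ']
    have hstep : ∀ i ∈ Finset.range (j+1),
        gg b (j+1) (i+1) * (-1:ℝ)^(i+1) * b^((i+1)*((i+1)-1)/2) *
            qgammab b (lam - ((i+1:ℕ):ℤ)) (phi:ℤ)
          = gg b j (i+1) * (-1:ℝ)^(i+1) * b^((i+1)*((i+1)-1)/2) *
              qgammab b (lam - ((i+1:ℕ):ℤ)) (phi:ℤ)
            + (-(b^(j:ℤ))) * (gg b j i * (-1:ℝ)^i * b^(i*(i-1)/2) *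
              qgammab b (lam - 1 - (i:ℤ)) (phi:ℤ)) := by
      intro i _
      rw [gg_pascal hb0 hb]
      have hσ : (i+1)*((i+1)-1)/2 = i*(i-1)/2 + i := by
        rw [← Nat.choose_two_right, ← Nat.choose_two_right, Nat.choose_succ_succ]
        simp [Nat.choose_one_right, Nat.add_comm]
      have harg : lam - ((i+1:ℕ):ℤ) = lam - 1 - (i:ℤ) := by push_cast; ring
      rw [hσ, harg, pow_add, pow_succ]
      have hbj : b ^ ((j:ℤ) - (i:ℤ)) * b ^ (i:ℕ) = b ^ (j:ℤ) := by
        rw [← zpow_natCast b i, ← zpow_add₀ hb0]; congr 1; ring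
      linear_combination (-((-1:ℝ)^i) * b^(i*(i-1)/2) * gg b j i *
        qgammab b (lam - 1 - (i:ℤ)) (phi:ℤ)) * hbj
    rw [Finset.sum_congr rfl hstep, Finset.sum_add_distrib]
    have h0 : gg b (j+1) 0 = gg b j 0 := by unfold gg; simp
    rw [add_right_comm, h0]
    rw [← Finset.sum_range_succ'
      (fun i => gg b j i * (-1:ℝ)^i * b^(i*(i-1)/2) * qgammab b (lam - (i:ℤ)) (phi:ℤ)) (j+1)]
    rw [Finset.sum_range_succ]
    have hz : gg b j (j+1) = 0 := gg_of_gt (Nat.lt_succ_self j)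
    rw [hz, zero_mul, zero_mul, zero_mul, add_zero, ← Finset.mul_sum]
    have ih1 := ih lam
    have ih2 := ih (lam - 1)
    simp only [gaussb_eq_gg] at ih1 ih2
    rw [ih1, ih2]
    set P := ∏ i ∈ Finset.range j, ((b:ℝ)^phi - b^i) with hP
    rcases Nat.lt_or_ge phi j with hlt | hge
    · have hP0 : P = 0 :=
        Finset.prod_eq_zero (Finset.mem_range.2 hlt) (sub_self _)
      have hP1 : (∏ i ∈ Finset.range (j+1), ((b:ℝ)^phi - b^i)) = 0 :=
        Finset.prod_eq_zero (Finset.mem_range.2 (Nat.lt_succ_of_lt hlt)) (sub_self _)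
      simp [hP0, hP1]
    · obtain ⟨d, hd⟩ : ∃ d, phi = j + d := ⟨phi - j, (Nat.add_sub_cancel' hge).symm⟩
      subst hd
      have c1 : ((j + d : ℕ):ℤ) - (j:ℤ) = (d:ℤ) := by push_cast; ring
      have c2 : ((j + d : ℕ):ℤ) - ((j+1:ℕ):ℤ) = (d:ℤ) - 1 := by push_cast; ring
      have c3 : lam - ((j+1:ℕ):ℤ) = lam - (j:ℤ) - 1 := by push_cast; ring
      have c4 : lam - 1 - (j:ℤ) = lam - (j:ℤ) - 1 := by ring
      rw [c1, c2, c3, c4]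
      have hQ : qgammab b (lam - (j:ℤ)) (d:ℤ)
          = qgammab b (lam - (j:ℤ) - 1) (d:ℤ)
            - b^(lam - (j:ℤ) - 1) * ((b:ℝ)^d - 1) * qgammab b (lam - (j:ℤ) - 1) ((d:ℤ)-1) := by
        linear_combination qg_diff hb0 (lam - (j:ℤ)) d
      rw [hQ, Finset.prod_range_succ, pow_add]
      have F1 : b ^ ((j:ℤ) * (lam - (j:ℤ))) = (b^(lam - (j:ℤ) - 1))^j * b^j := by
        rw [← zpow_natCast (b^(lam - (j:ℤ) - 1)) j, ← zpow_mul, ← zpow_natCast b j,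
          ← zpow_add₀ hb0]
        congr 1; ring
      have F2 : b ^ ((j:ℤ) * (lam - (j:ℤ) - 1)) = (b^(lam - (j:ℤ) - 1))^j := by
        rw [← zpow_natCast (b^(lam - (j:ℤ) - 1)) j, ← zpow_mul]; congr 1; ring
      have F3 : b ^ (((j+1:ℕ):ℤ) * (lam - (j:ℤ) - 1)) = (b^(lam - (j:ℤ) - 1))^(j+1) := by
        rw [← zpow_natCast (b^(lam - (j:ℤ) - 1)) (j+1), ← zpow_mul]; congr 1; push_cast; ring
      rw [F1, F2, F3, zpow_natCast b j]
      ring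
end

section
/- Define ε(Λ, φ, i) = ∑_{ℓ=0}^{i} [i choose ℓ]_b [Λ-i choose φ-ℓ]_b b^{ℓ(Λ-φ)} (-1)^ℓ b^{σ_ℓ} ∏_{j=0}^{i-ℓ-1}(b^{φ-ℓ} - b^j). Then for all integers Λ, φ, i with 0 ≤ i ≤ φ ≤ Λ, ε(Λ, φ, i) = (-1)^i b^{σ_i} [Λ-i choose Λ-φ]_b. -/
open Finset

noncomputable def Qb (b : ℝ) (j : ℕ) : ℝ := ∏ m ∈ Finset.range j, (b ^ (m + 1) - 1)

noncomputable def Pb (b : ℝ) (x : ℤ) (k : ℕ) : ℝ :=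
  ∏ j ∈ Finset.range k, (b ^ (x - (j : ℤ)) - 1)

noncomputable def Gb (b : ℝ) (n k : ℕ) : ℝ :=
  ∏ m ∈ Finset.range k, (b ^ ((n : ℤ) - (m : ℤ)) - 1) / (b ^ ((m : ℤ) + 1) - 1)

section lemmas
variable {b : ℝ}

lemma Qb_ne (hb : ∀ m : ℕ, 0 < m → b ^ m ≠ 1) (j : ℕ) : Qb b j ≠ 0 := by
  refine Finset.prod_ne_zero_iff.2 fun m _ => ?_
  exact sub_ne_zero.2 (hb (m + 1) (Nat.succ_pos m))

lemma Gb_zero {n k : ℕ} (h : n < k) : Gb b n k = 0 := by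
  refine Finset.prod_eq_zero (Finset.mem_range.2 h) ?_
  simp

lemma Pb_zero {n k : ℕ} (h : n < k) : Pb b (n : ℤ) k = 0 := by
  refine Finset.prod_eq_zero (Finset.mem_range.2 h) ?_
  simp

lemma Gb_eq_div (n k : ℕ) : Gb b n k = Pb b (n : ℤ) k / Qb b k := by
  rw [Gb, Pb, Qb, ← Finset.prod_div_distrib]
  refine Finset.prod_congr rfl fun m _ => ?_
  rw [show ((m : ℤ) + 1) = ((m + 1 : ℕ) : ℤ) by omega, zpow_natCast]

lemma Pb_mul_Qb {n k : ℕ} (hk : k ≤ n) : Pb b (n : ℤ) k * Qb b (n - k) = Qb b n := by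
  obtain ⟨c, rfl⟩ : ∃ c, n = c + k := ⟨n - k, by omega⟩
  have h1 : Qb b (c + k) = Qb b c * ∏ x ∈ Finset.range k, (b ^ (c + x + 1) - 1) :=
    Finset.prod_range_add (fun m => b ^ (m + 1) - 1) c k
  have h2 : Pb b ((c + k : ℕ) : ℤ) k = ∏ x ∈ Finset.range k, (b ^ (c + x + 1) - 1) := by
    rw [Pb, ← Finset.prod_range_reflect]
    refine Finset.prod_congr rfl fun j hj => ?_
    rw [Finset.mem_range] at hj
    rw [show ((c + k : ℕ) : ℤ) - ((k - 1 - j : ℕ) : ℤ) = ((c + j + 1 : ℕ) : ℤ) by omega,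
      zpow_natCast]
  rw [h2, h1, show c + k - k = c by omega]
  ring

lemma Pb_eq_div (hb : ∀ m : ℕ, 0 < m → b ^ m ≠ 1) {n k : ℕ} (hk : k ≤ n) :
    Pb b (n : ℤ) k = Qb b n / Qb b (n - k) := by
  rw [eq_div_iff (Qb_ne hb _), Pb_mul_Qb hk]

lemma Gb_eq (hb : ∀ m : ℕ, 0 < m → b ^ m ≠ 1) {n k : ℕ} (hk : k ≤ n) :
    Gb b n k = Qb b n / (Qb b k * Qb b (n - k)) := by
  rw [Gb_eq_div, Pb_eq_div hb hk]
  rw [div_div, mul_comm]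

lemma Gb_symm (hb : ∀ m : ℕ, 0 < m → b ^ m ≠ 1) {n k : ℕ} (hk : k ≤ n) :
    Gb b n k = Gb b n (n - k) := by
  rw [Gb_eq hb hk, Gb_eq hb (Nat.sub_le n k), show n - (n - k) = k by omega]
  ring_nf

end lemmas

section part2
variable {b : ℝ}

lemma Qb_succ (j : ℕ) : Qb b (j + 1) = Qb b j * (b ^ (j + 1) - 1) :=
  Finset.prod_range_succ _ j

lemma Pb_succ (x : ℤ) (k : ℕ) : Pb b x (k + 1) = Pb b x k * (b ^ (x - (k : ℤ)) - 1) :=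
  Finset.prod_range_succ _ k

lemma Gb_zero_right (n : ℕ) : Gb b n 0 = 1 := by simp [Gb]

lemma Qb_zero : Qb b 0 = 1 := by simp [Qb]

lemma Gb_self (hb : ∀ m : ℕ, 0 < m → b ^ m ≠ 1) (n : ℕ) : Gb b n n = 1 := by
  rw [Gb_eq hb le_rfl, Nat.sub_self, Qb_zero, mul_one, div_self (Qb_ne hb n)]

lemma Gb_pascal (hb : ∀ m : ℕ, 0 < m → b ^ m ≠ 1) {n k : ℕ} (hk : k ≤ n) :
    Gb b (n + 1) (k + 1) = Gb b n (k + 1) + b ^ (n - k) * Gb b n k := by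
  obtain ⟨d, rfl⟩ : ∃ d, n = k + d := ⟨n - k, by omega⟩
  rcases d with _ | e
  · simp only [Nat.add_zero, Nat.sub_self, pow_zero, one_mul]
    rw [Gb_zero (Nat.lt_succ_self k), Gb_self hb, Gb_self hb, zero_add]
  · have h1 : Gb b (k + (e+1) + 1) (k+1) =
        Qb b (k + (e+1) + 1) / (Qb b (k+1) * Qb b (e+1)) := by
      rw [Gb_eq hb (by omega), show k + (e+1) + 1 - (k+1) = e + 1 from by omega]
    have h2 : Gb b (k + (e+1)) (k+1) =
        Qb b (k + (e+1)) / (Qb b (k+1) * Qb b e) := by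
      rw [Gb_eq hb (by omega), show k + (e+1) - (k+1) = e from by omega]
    have h3 : Gb b (k + (e+1)) k =
        Qb b (k + (e+1)) / (Qb b k * Qb b (e+1)) := by
      rw [Gb_eq hb (by omega), show k + (e+1) - k = e + 1 from by omega]
    rw [h1, h2, h3, show k + (e+1) - k = e + 1 from by omega]
    have q1 : Qb b (k + (e+1) + 1) = Qb b (k + (e+1)) * (b ^ (k + (e+1) + 1) - 1) :=
      Qb_succ _
    have q2 : Qb b (k+1) = Qb b k * (b ^ (k+1) - 1) := Qb_succ _
    have q3 : Qb b (e+1) = Qb b e * (b ^ (e+1) - 1) := Qb_succ _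
    rw [q1, q2, q3]
    have n1 := Qb_ne hb (k + (e+1))
    have n2 := Qb_ne hb k
    have n3 := Qb_ne hb e
    have n4 : b ^ (k+1) - 1 ≠ 0 := sub_ne_zero.2 (hb _ (by omega))
    have n5 : b ^ (e+1) - 1 ≠ 0 := sub_ne_zero.2 (hb _ (by omega))
    field_simp
    ring
end part2

noncomputable def Tb (b : ℝ) (N i k : ℕ) : ℝ :=
  (-1 : ℝ) ^ k * b ^ (((i : ℤ) - k) * ((N : ℤ) - k)) * Gb b i k * Pb b (N : ℤ) k

noncomputable def Db (b : ℝ) (N i k : ℕ) : ℝ :=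
  (-1 : ℝ) ^ k * b ^ (((i : ℤ) + 1 - k) * ((N : ℤ) - k)) * Gb b i k * Pb b (N : ℤ) k

section part3
variable {b : ℝ}

lemma Tb_star (hb0 : b ≠ 0) (hb : ∀ m : ℕ, 0 < m → b ^ m ≠ 1) (N i : ℕ) :
    ∑ k ∈ Finset.range (i + 1), Tb b N i k = 1 := by
  induction i with
  | zero => simp [Tb, Gb_zero_right, Pb]
  | succ i ih =>
    have key : ∀ k ∈ Finset.range (i + 1), Tb b N (i + 1) (k + 1) =
        Db b N i (k + 1) + (Tb b N i k - b ^ ((N : ℤ) - k) * Tb b N i k) := by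
      intro k hk
      rw [Finset.mem_range] at hk
      have hk' : k ≤ i := by omega
      rw [Tb, Db, Tb, Gb_pascal hb hk', Pb_succ]
      have e2 : (b : ℝ) ^ (i - k) = b ^ ((i : ℤ) - k) := by
        rw [show (i:ℤ) - k = ((i - k : ℕ) : ℤ) from by omega, zpow_natCast]
      push_cast
      have e0 : (((i:ℤ) + 1) - ((k:ℤ) + 1)) * ((N:ℤ) - ((k:ℤ) + 1)) =
          ((i:ℤ) - k) * ((N:ℤ) - ((k:ℤ) + 1)) := by ring
      have e1 : (b : ℝ) ^ (((i:ℤ) - k) * ((N:ℤ) - k)) =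
          b ^ (((i:ℤ) - k) * ((N:ℤ) - ((k:ℤ)+1))) * b ^ ((i : ℤ) - k) := by
        rw [← zpow_add₀ hb0]; congr 1; ring
      rw [e0, e1, e2]
      ring
    have hD : ∀ k : ℕ, Db b N i k = b ^ ((N : ℤ) - k) * Tb b N i k := by
      intro k
      rw [Tb, Db]
      have : (b : ℝ) ^ (((i : ℤ) + 1 - k) * ((N : ℤ) - k)) =
          b ^ ((N : ℤ) - k) * b ^ (((i : ℤ) - k) * ((N : ℤ) - k)) := by
        rw [← zpow_add₀ hb0]; congr 1; ring
      rw [this]; ring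
    have h0 : Tb b N (i + 1) 0 = Db b N i 0 := by
      simp [Tb, Db, Gb_zero_right]
    have A := Finset.sum_range_succ' (Db b N i) (i + 1)
    have B := Finset.sum_range_succ (Db b N i) (i + 1)
    have C : Db b N i (i + 1) = 0 := by
      rw [Db, Gb_zero (Nat.lt_succ_self i)]; ring
    have D' : ∑ k ∈ Finset.range (i + 1), Db b N i k =
        ∑ k ∈ Finset.range (i + 1), b ^ ((N : ℤ) - (k:ℤ)) * Tb b N i k :=
      Finset.sum_congr rfl fun k _ => hD k
    rw [Finset.sum_range_succ' (Tb b N (i + 1)) (i + 1), Finset.sum_congr rfl key,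
      Finset.sum_add_distrib, Finset.sum_sub_distrib, h0]
    linarith [A, B, C, D', ih]
end part3

lemma tri_succ (n : ℕ) : (n + 1) * n / 2 = n * (n - 1) / 2 + n := by
  rcases n with _ | m
  · simp
  · have h : (m + 2) * (m + 1) = (m + 1) * m + (m + 1) * 2 := by ring
    rw [h, Nat.add_mul_div_right _ _ (by norm_num : (0:ℕ) < 2)]
    simp

lemma sigma_add (a c : ℕ) :
    (a + c) * ((a + c) - 1) / 2 = a * (a - 1) / 2 + c * (c - 1) / 2 + a * c := by
  induction c with
  | zero => simp
  | succ c ih =>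
    have h1 : (a + (c + 1)) * ((a + (c + 1)) - 1) / 2 = (a + c) * ((a + c) - 1) / 2 + (a + c) := by
      rw [show a + (c + 1) = (a + c) + 1 from by omega, Nat.add_sub_cancel]
      exact tri_succ (a + c)
    have h2 : (c + 1) * ((c + 1) - 1) / 2 = c * (c - 1) / 2 + c := by
      rw [Nat.add_sub_cancel]; exact tri_succ c
    have h3 : a * (c + 1) = a * c + a := by ring
    rw [h1, h2, h3, ih]
    ring

section part5
variable {b : ℝ}

/-- factor out powers of b from the product -/
lemma prod_shift (hb0 : b ≠ 0) (x k : ℕ) :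
    ∏ j ∈ Finset.range k, (b ^ ((x : ℤ)) - b ^ j) = b ^ (k * (k - 1) / 2) * Pb b (x : ℤ) k := by
  have step : ∀ j : ℕ, b ^ ((x : ℤ)) - b ^ j = b ^ j * (b ^ ((x : ℤ) - j) - 1) := by
    intro j
    rw [mul_sub, mul_one, ← zpow_natCast b j, ← zpow_add₀ hb0]
    congr 2
    ring
  rw [Finset.prod_congr rfl (fun j _ => step j), Finset.prod_mul_distrib, Pb,
    Finset.prod_pow_eq_pow_sum, Finset.sum_range_id]

/-- the crux product identity -/
lemma crux (hb0 : b ≠ 0) (hb : ∀ m : ℕ, 0 < m → b ^ m ≠ 1) (N c k : ℕ) :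
    Gb b (N + c) (c + k) * Pb b ((c + k : ℕ) : ℤ) k = Gb b (N + c) N * Pb b (N : ℤ) k := by
  rcases le_or_gt k N with hkN | hkN
  · have h1 : Gb b (N + c) (c + k) = Qb b (N + c) / (Qb b (c + k) * Qb b (N - k)) := by
      rw [Gb_eq hb (by omega), show N + c - (c + k) = N - k from by omega]
    have h2 : Pb b ((c + k : ℕ) : ℤ) k = Qb b (c + k) / Qb b c := by
      rw [Pb_eq_div hb (by omega : k ≤ c + k), show c + k - k = c from by omega]
    have h3 : Gb b (N + c) N = Qb b (N + c) / (Qb b N * Qb b c) := by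
      rw [Gb_eq hb (by omega), show N + c - N = c from by omega]
    have h4 : Pb b (N : ℤ) k = Qb b N / Qb b (N - k) := Pb_eq_div hb hkN
    rw [h1, h2, h3, h4]
    have n1 := Qb_ne hb (c + k)
    have n2 := Qb_ne hb (N - k)
    have n3 := Qb_ne hb c
    have n4 := Qb_ne hb N
    field_simp
  · rw [Gb_zero (by omega : N + c < c + k), Pb_zero hkN]
    ring

lemma gaussb_cast (b : ℝ) (n k : ℕ) : gaussb b (n : ℤ) (k : ℤ) = Gb b n k := by
  rcases le_or_gt k n with h | h
  · rw [gaussb, if_pos ⟨Int.natCast_nonneg k, by exact_mod_cast h⟩]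
    simp [Gb, Int.toNat_natCast]
  · rw [gaussb, if_neg (by push_cast; omega), Gb_zero h]

end part5

section part6
variable {b : ℝ}

lemma termwise (hb0 : b ≠ 0) (hb : ∀ m : ℕ, 0 < m → b ^ m ≠ 1) (N l k c : ℕ) :
    Gb b (l + k) l * Gb b (N + c) (c + k) * b ^ ((l : ℤ) * (N : ℤ)) * (-1 : ℝ) ^ l *
      b ^ (l * (l - 1) / 2) * ∏ j ∈ Finset.range k, (b ^ (((c + k : ℕ)) : ℤ) - b ^ j)
    = (-1 : ℝ) ^ (l + k) * b ^ ((l + k) * ((l + k) - 1) / 2) * Gb b (N + c) N *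
        Tb b N (l + k) k := by
  rw [prod_shift hb0 (c + k) k, Tb]
  rw [Gb_symm hb (show l ≤ l + k from by omega), show l + k - l = k from by omega]
  have hc := crux hb0 hb N c k
  have hsgn : ((-1 : ℝ)) ^ (l + k) * (-1) ^ k = (-1) ^ l := by
    rw [← pow_add, show l + k + k = l + 2 * k from by omega, pow_add, pow_mul]
    norm_num
  have hσz : (((l + k) * ((l + k) - 1) / 2 : ℕ) : ℤ) =
      ((l * (l - 1) / 2 : ℕ) : ℤ) + ((k * (k - 1) / 2 : ℕ) : ℤ) + (l : ℤ) * (k : ℤ) := by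
    have h := congrArg (fun t : ℕ => (t : ℤ)) (sigma_add l k)
    push_cast at h
    exact_mod_cast h
  have hpow : b ^ ((l : ℤ) * (N : ℤ)) * b ^ (l * (l - 1) / 2) * b ^ (k * (k - 1) / 2) =
      b ^ ((l + k) * ((l + k) - 1) / 2) *
        b ^ ((((l + k : ℕ) : ℤ) - (k : ℤ)) * ((N : ℤ) - (k : ℤ))) := by
    rw [← zpow_natCast b (l * (l - 1) / 2), ← zpow_natCast b (k * (k - 1) / 2),
      ← zpow_natCast b ((l + k) * ((l + k) - 1) / 2),
      ← zpow_add₀ hb0, ← zpow_add₀ hb0, ← zpow_add₀ hb0]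
    congr 1
    rw [hσz]
    push_cast
    ring
  linear_combination
    (Gb b (l + k) k * (-1 : ℝ) ^ l *
      (b ^ ((l : ℤ) * (N : ℤ)) * b ^ (l * (l - 1) / 2) * b ^ (k * (k - 1) / 2))) * hc
    + (Gb b (l + k) k * Gb b (N + c) N * Pb b (N : ℤ) k * (-1 : ℝ) ^ l) * hpow
    - (Gb b (l + k) k * Gb b (N + c) N * Pb b (N : ℤ) k *
        (b ^ ((l + k) * ((l + k) - 1) / 2) *
          b ^ ((((l + k : ℕ) : ℤ) - (k : ℤ)) * ((N : ℤ) - (k : ℤ))))) * hsgn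
end part6
theorem epsilon_closed_form (b : ℝ) (hb0 : b ≠ 0) (hb : ∀ m : ℕ, 0 < m → b ^ m ≠ 1)
    (Lam : ℤ) (phi i : ℕ) (hip : i ≤ phi) (hpL : (phi : ℤ) ≤ Lam) :
    ∑ l ∈ Finset.range (i + 1),
        gaussb b (i : ℤ) (l : ℤ) * gaussb b (Lam - (i : ℤ)) ((phi : ℤ) - l) *
          b ^ ((l : ℤ) * (Lam - (phi : ℤ))) * (-1 : ℝ) ^ l * b ^ (l * (l - 1) / 2) *
            ∏ j ∈ Finset.range (i - l), (b ^ ((phi : ℤ) - l) - b ^ j) =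
      (-1 : ℝ) ^ i * b ^ (i * (i - 1) / 2) * gaussb b (Lam - (i : ℤ)) (Lam - (phi : ℤ)) := by
  obtain ⟨N, hN⟩ := Int.le.dest hpL
  have hMi : Lam - (i : ℤ) = ((N + (phi - i) : ℕ) : ℤ) := by omega
  have hLp : Lam - (phi : ℤ) = ((N : ℕ) : ℤ) := by omega
  rw [hMi, hLp]
  have hterm : ∀ l ∈ Finset.range (i + 1),
      gaussb b (i : ℤ) (l : ℤ) * gaussb b ((N + (phi - i) : ℕ) : ℤ) ((phi : ℤ) - l) *
          b ^ ((l : ℤ) * ((N : ℕ) : ℤ)) * (-1 : ℝ) ^ l * b ^ (l * (l - 1) / 2) *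
            ∏ j ∈ Finset.range (i - l), (b ^ ((phi : ℤ) - l) - b ^ j) =
      (-1 : ℝ) ^ i * b ^ (i * (i - 1) / 2) * Gb b (N + (phi - i)) N * Tb b N i (i - l) := by
    intro l hl
    rw [Finset.mem_range] at hl
    have hli : l ≤ i := by omega
    have h1 : (phi : ℤ) - l = ((phi - l : ℕ) : ℤ) := by omega
    rw [h1, gaussb_cast, gaussb_cast]
    have ht := termwise hb0 hb N l (i - l) (phi - i)
    rw [show l + (i - l) = i from by omega,
      show (phi - i) + (i - l) = phi - l from by omega] at ht
    exact ht
  rw [Finset.sum_congr rfl hterm]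
  have hr := Finset.sum_range_reflect (fun j => Tb b N i j) (i + 1)
  simp only [Nat.add_sub_cancel] at hr
  calc ∑ l ∈ Finset.range (i + 1),
        (-1 : ℝ) ^ i * b ^ (i * (i - 1) / 2) * Gb b (N + (phi - i)) N * Tb b N i (i - l)
      = ((-1 : ℝ) ^ i * b ^ (i * (i - 1) / 2) * Gb b (N + (phi - i)) N) *
          ∑ l ∈ Finset.range (i + 1), Tb b N i (i - l) := by
        rw [Finset.mul_sum]
    _ = ((-1 : ℝ) ^ i * b ^ (i * (i - 1) / 2) * Gb b (N + (phi - i)) N) * 1 := by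
        rw [hr, Tb_star hb0 hb]
    _ = (-1 : ℝ) ^ i * b ^ (i * (i - 1) / 2) * gaussb b ((N + (phi - i) : ℕ) : ℤ) ((N : ℕ) : ℤ) := by
        rw [mul_one, gaussb_cast]
end
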